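/- Let D = {g_j}_{j∈J} be a finite frame in C^N with frame bounds A ≤ B, and analysis operator A_D f = (⟨f, g_j⟩)_j. Then for any f in C^N and any 1 ≤ p ≤ 2, ‖A_D f‖_p ≥ A^{1/p} · (max_j ‖g_j‖_2)^{1 - 2/p} · ‖f‖_2. -/

import Mathlib

open Finset

noncomputable def lpnorm {ι : Type*} [Fintype ι] (p : ℝ) (f : ι → ℂ) : ℝ :=
  (∑ i, ‖f i‖ ^ p) ^ (1 / p)

noncomputable def ip {ι : Type*} [Fintype ι] (x y : ι → ℂ) : ℂ :=
  ∑ i, x i * (starRingEnd ℂ) (y i)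

lemma lpnorm_two_eq {ι : Type*} [Fintype ι] (f : ι → ℂ) :
    lpnorm 2 f = Real.sqrt (∑ i, ‖f i‖ ^ 2) := by
  have h : ∀ i, ‖f i‖ ^ (2:ℝ) = ‖f i‖ ^ (2:ℕ) := fun i => by
    rw [← Real.rpow_natCast]; norm_num
  simp_rw [lpnorm, h, Real.sqrt_eq_rpow]

lemma lpnorm_nonneg {ι : Type*} [Fintype ι] (p : ℝ) (f : ι → ℂ) : 0 ≤ lpnorm p f := by
  apply Real.rpow_nonneg
  apply Finset.sum_nonneg
  intro i _
  exact Real.rpow_nonneg (norm_nonneg _) _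

lemma cs {ι : Type*} [Fintype ι] (x y : ι → ℂ) :
    ‖ip x y‖ ≤ lpnorm 2 x * lpnorm 2 y := by
  rw [lpnorm_two_eq, lpnorm_two_eq]
  calc ‖ip x y‖ ≤ ∑ i, ‖x i * (starRingEnd ℂ) (y i)‖ :=
        norm_sum_le _ _
    _ = ∑ i, ‖x i‖ * ‖y i‖ := by
        simp [map_mul]
    _ ≤ _ := Real.sum_mul_le_sqrt_mul_sqrt _ _ _

/-- Lieb-type uncertainty principle for frames, lower bound, 1 ≤ p ≤ 2. -/
theorem stmt9 {N : ℕ} {J : Type*} [Fintype J] [Nonempty J]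
    (g : J → Fin N → ℂ) (A B : ℝ) (hA : 0 < A) (hAB : A ≤ B)
    (hframe : ∀ f : Fin N → ℂ,
      A * (lpnorm 2 f) ^ 2 ≤ ∑ j, ‖ip f (g j)‖ ^ 2 ∧
        ∑ j, ‖ip f (g j)‖ ^ 2 ≤ B * (lpnorm 2 f) ^ 2)
    (f : Fin N → ℂ) (p : ℝ) (hp1 : 1 ≤ p) (hp2 : p ≤ 2) :
    A ^ (1 / p) * (⨆ j, lpnorm 2 (g j)) ^ (1 - 2 / p) * lpnorm 2 f ≤
      lpnorm p (fun j => ip f (g j)) := by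
  have hp0 : 0 < p := lt_of_lt_of_le one_pos hp1
  set M : ℝ := ⨆ j, lpnorm 2 (g j) with hMdef
  have hMle : ∀ j, lpnorm 2 (g j) ≤ M := fun j =>
    le_ciSup (f := fun j => lpnorm 2 (g j)) (Set.Finite.bddAbove (Set.finite_range _)) j
  have hM0 : 0 ≤ M := le_trans (lpnorm_nonneg 2 (g (Classical.arbitrary J))) (hMle _)
  -- trivial case f-norm zero
  rcases eq_or_lt_of_le (lpnorm_nonneg 2 f) with hf0 | hf0
  · rw [← hf0, mul_zero]
    exact lpnorm_nonneg p _
  -- M is positive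
  have hlow := (hframe f).1
  have hMpos : 0 < M := by
    by_contra h
    push_neg at h
    have hM : M = 0 := le_antisymm h hM0
    have : ∑ j, ‖ip f (g j)‖ ^ 2 = 0 := by
      apply Finset.sum_eq_zero
      intro j _
      have h1 : lpnorm 2 (g j) = 0 := le_antisymm (hM ▸ hMle j) (lpnorm_nonneg 2 (g j))
      have h2 := cs f (g j)
      rw [h1, mul_zero] at h2
      have : ‖ip f (g j)‖ = 0 := le_antisymm h2 (norm_nonneg _)
      rw [this]; ring
    rw [this] at hlow
    nlinarith [mul_pos hA (pow_pos hf0 2)]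
  set C : ℝ := lpnorm 2 f * M with hCdef
  have hCpos : 0 < C := mul_pos hf0 hMpos
  have hxle : ∀ j, ‖ip f (g j)‖ ≤ C :=
    fun j => (cs f (g j)).trans (mul_le_mul_of_nonneg_left (hMle j) (lpnorm_nonneg 2 f))
  -- key pointwise bound
  have hkey : ∀ j, ‖ip f (g j)‖ ^ 2 * C ^ (p - 2) ≤
      ‖ip f (g j)‖ ^ p := by
    intro j
    rcases eq_or_lt_of_le (norm_nonneg (ip f (g j))) with hx0 | hx0
    · rw [← hx0, Real.zero_rpow (ne_of_gt hp0)]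
      norm_num
    · have h1 : C ^ (p - 2) ≤ ‖ip f (g j)‖ ^ (p - 2) :=
        Real.rpow_le_rpow_of_nonpos hx0 (hxle j) (by linarith)
      calc ‖ip f (g j)‖ ^ 2 * C ^ (p - 2)
          ≤ ‖ip f (g j)‖ ^ 2 * ‖ip f (g j)‖ ^ (p - 2) := by
            apply mul_le_mul_of_nonneg_left h1 (by positivity)
        _ = ‖ip f (g j)‖ ^ p := by
            rw [← Real.rpow_natCast (‖ip f (g j)‖) 2,
              ← Real.rpow_add hx0]
            norm_num
  -- sum bound
  have hsum : A * (lpnorm 2 f) ^ 2 * C ^ (p - 2) ≤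
      ∑ j, ‖ip f (g j)‖ ^ p := by
    calc A * (lpnorm 2 f) ^ 2 * C ^ (p - 2)
        ≤ (∑ j, ‖ip f (g j)‖ ^ 2) * C ^ (p - 2) :=
          mul_le_mul_of_nonneg_right hlow (Real.rpow_nonneg hCpos.le _)
      _ = ∑ j, ‖ip f (g j)‖ ^ 2 * C ^ (p - 2) := by
          rw [Finset.sum_mul]
      _ ≤ _ := Finset.sum_le_sum fun j _ => hkey j
  -- take 1/p powers
  have hfinal : (A * (lpnorm 2 f) ^ 2 * C ^ (p - 2)) ^ (1 / p) ≤
      lpnorm p (fun j => ip f (g j)) :=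
    Real.rpow_le_rpow (by positivity) hsum (by positivity)
  refine le_trans (le_of_eq ?_) hfinal
  rw [Real.mul_rpow (by positivity) (by positivity),
    Real.mul_rpow hA.le (by positivity),
    ← Real.rpow_natCast (lpnorm 2 f) 2, ← Real.rpow_mul hf0.le,
    ← Real.rpow_mul hCpos.le, hCdef,
    Real.mul_rpow hf0.le hMpos.le]
  have e1 : (p - 2) * (1 / p) = 1 - 2 / p := by field_simp
  rw [e1]
  have e2 : lpnorm 2 f = lpnorm 2 f ^ (((2:ℕ):ℝ) * (1 / p)) * lpnorm 2 f ^ (1 - 2 / p) := by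
    rw [← Real.rpow_add hf0,
      show ((2:ℕ):ℝ) * (1 / p) + (1 - 2 / p) = 1 by push_cast; field_simp; ring,
      Real.rpow_one]
  conv_lhs => rw [e2]
  ring
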